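/- arXiv:2407.21151 — 3 statements merged into one kernel-verified Lean document; each statement's English description precedes it below -/
import Mathlib

section
/- Let m, m' ∈ ℝ with Δ = |m − m'| > 0, let σ > 0 and ε ≥ 0. Let ν and ν' denote the Gaussian measures on ℝ with means m and m' respectively and common variance σ². Then sup over all measurable sets R ⊆ ℝ of (ν(R) − e^ε · ν'(R)) equals Φ(Δ/(2σ) − ε·σ/Δ) − e^ε · Φ(−Δ/(2σ) − ε·σ/Δ), and the supremum is attained at the set R = {x ∈ ℝ : (density of ν at x) > e^ε · (density of ν' at x)}. -/
open MeasureTheory ProbabilityTheory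

/-- The cumulative distribution function of the standard normal distribution. -/
noncomputable def stdNormalCDF (x : ℝ) : ℝ :=
  ((gaussianReal 0 1) (Set.Iic x)).toReal

/-! The log-likelihood ratio of two Gaussians with the same variance `σ²` is affine in `x`,
so the set `{p > e^ε p'}` is the half-line, on the side of `m`, cut off at distance `εσ²/Δ`
from the midpoint `(m + m') / 2`. Standardising under each Gaussian gives the two values of
`Φ`. This set maximises `ν R - e^ε ν' R` because it is exactly where the density
`p - e^ε p'` of this signed measure is positive. -/

open Set NNReal

theorem setIntegral_le_setIntegral_pos {α : Type*} [MeasurableSpace α] {μ : Measure α}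
    {f : α → ℝ} {R : Set α} (hR : MeasurableSet R)
    (hf : StronglyMeasurable f) (hfi : Integrable f μ) :
    ∫ x in R, f x ∂μ ≤ ∫ x in {y | 0 < f y}, f x ∂μ :=
  calc ∫ x in R, f x ∂μ
      ≤ ∫ x in {y | 0 ≤ f y}, f x ∂μ := setIntegral_le_nonneg hR hf hfi
    _ = ∫ x in {y | 0 < f y}, f x ∂μ :=
      setIntegral_eq_of_subset_of_forall_sdiff_eq_zero
        (stronglyMeasurable_const.measurableSet_le hf) (fun _ (hx : 0 < f _) => hx.le)
        (fun _ hx => le_antisymm (not_lt.mp hx.2) hx.1)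

theorem gaussianReal_toReal_sub_mul_eq_setIntegral (m m' c : ℝ) {v : ℝ≥0} (hv : v ≠ 0)
    (R : Set ℝ) :
    (gaussianReal m v R).toReal - c * (gaussianReal m' v R).toReal
      = ∫ x in R, (gaussianPDFReal m v x - c * gaussianPDFReal m' v x) := by
  have toReal_eq (a : ℝ) : (gaussianReal a v R).toReal = ∫ x in R, gaussianPDFReal a v x := by
    rw [gaussianReal_apply_eq_integral _ hv, ENNReal.toReal_ofReal]
    exact integral_nonneg fun x => gaussianPDFReal_nonneg _ _ _
  rw [toReal_eq, toReal_eq, integral_sub (integrable_gaussianPDFReal m v).integrableOn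
    ((integrable_gaussianPDFReal m' v).const_mul c).integrableOn, integral_const_mul]

theorem gaussianReal_toReal_sub_mul_le (m m' c : ℝ) {v : ℝ≥0} (hv : v ≠ 0)
    {R : Set ℝ} (hR : MeasurableSet R) :
    (gaussianReal m v R).toReal - c * (gaussianReal m' v R).toReal
      ≤ (gaussianReal m v {x | c * gaussianPDFReal m' v x < gaussianPDFReal m v x}).toReal
        - c * (gaussianReal m' v
            {x | c * gaussianPDFReal m' v x < gaussianPDFReal m v x}).toReal := by
  simp_rw [gaussianReal_toReal_sub_mul_eq_setIntegral m m' c hv, ← sub_pos (b := c * _)]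
  exact setIntegral_le_setIntegral_pos hR
    ((measurable_gaussianPDFReal m v).sub
      ((measurable_gaussianPDFReal m' v).const_mul c)).stronglyMeasurable
    ((integrable_gaussianPDFReal m v).sub ((integrable_gaussianPDFReal m' v).const_mul c))

theorem exp_mul_gaussianPDFReal_lt_iff (m m' ε : ℝ) {v : ℝ≥0} (hv : v ≠ 0) (x : ℝ) :
    Real.exp ε * gaussianPDFReal m' v x < gaussianPDFReal m v x
      ↔ 2 * ε * v < (m - m') * (2 * x - m - m') := by
  have hv' : (0 : ℝ) < v := NNReal.coe_pos.mpr hv.bot_lt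
  rw [gaussianPDFReal, gaussianPDFReal, mul_left_comm,
    mul_lt_mul_iff_right₀ (by positivity), ← Real.exp_add, Real.exp_lt_exp, ← sub_pos]
  have hquad : -(x - m) ^ 2 / (2 * v) - (ε + -(x - m') ^ 2 / (2 * v))
      = ((m - m') * (2 * x - m - m') - 2 * ε * v) / (2 * v) := by
    field_simp
    ring
  rw [hquad, div_pos_iff_of_pos_right (by positivity), sub_pos]

theorem gaussianReal_map_sub_div_eq_standard (m s : ℝ) {v : ℝ≥0} (hv : (v : ℝ) = s ^ 2)
    (hs : s ≠ 0) : (gaussianReal m v).map (fun x => (x - m) / s) = gaussianReal 0 1 := by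
  have hcomp : (fun x => (x - m) / s) = (· / s) ∘ (· - m) := rfl
  rw [hcomp, ← Measure.map_map (by fun_prop) (by fun_prop), gaussianReal_map_sub_const,
    gaussianReal_map_div_const, sub_self, zero_div]
  congr
  ext
  simp [hv, hs]

theorem gaussianReal_setOf_sub_div_lt_toReal (m s y c : ℝ) {v : ℝ≥0} (hv : (v : ℝ) = s ^ 2)
    (hs : s ≠ 0) :
    (gaussianReal m v {x | (x - y) / s < c}).toReal = stdNormalCDF ((y - m) / s + c) := by
  have hset : {x | (x - y) / s < c} = (fun x => (x - m) / s) ⁻¹' Iio ((y - m) / s + c) := by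
    ext x
    simp only [mem_ofPred_eq, mem_preimage, mem_Iio]
    rw [← sub_lt_iff_lt_add', div_sub_div_same, sub_sub_sub_cancel_right]
  have := nullSingletonClass_gaussianReal (μ := 0) (one_ne_zero (α := ℝ≥0))
  rw [hset, ← Measure.map_apply (by fun_prop) measurableSet_Iio,
    gaussianReal_map_sub_div_eq_standard m s hv hs, measure_congr Iio_ae_eq_Iic, stdNormalCDF]

theorem setOf_exp_mul_gaussianPDFReal_lt (m m' ε s : ℝ) {v : ℝ≥0} (hv : (v : ℝ) = s ^ 2)
    (hs : 0 < s * (m' - m)) :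
    {x | Real.exp ε * gaussianPDFReal m' v x < gaussianPDFReal m v x}
      = {x | (x - (m + m') / 2) / s < -(ε * s / (m' - m))} := by
  have hv0 : v ≠ 0 := by
    rw [ne_eq, ← NNReal.coe_eq_zero, hv]
    exact pow_ne_zero 2 (left_ne_zero_of_mul hs.ne')
  ext x
  have hgap : -(ε * s / (m' - m)) - (x - (m + m') / 2) / s
      = ((m - m') * (2 * x - m - m') - 2 * ε * s ^ 2) / (2 * (s * (m' - m))) := by
    field_simp [left_ne_zero_of_mul hs.ne', right_ne_zero_of_mul hs.ne']
    ring
  rw [mem_ofPred_eq, mem_ofPred_eq, exp_mul_gaussianPDFReal_lt_iff m m' ε hv0, hv, ← sub_pos,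
    ← sub_pos (a := -_), hgap, div_pos_iff_of_pos_right (by positivity)]

theorem gaussianReal_setOf_exp_mul_gaussianPDFReal_lt_toReal_sub (m m' ε s : ℝ) {v : ℝ≥0}
    (hv : (v : ℝ) = s ^ 2) (hs : 0 < s * (m' - m)) :
    (gaussianReal m v {x | Real.exp ε * gaussianPDFReal m' v x < gaussianPDFReal m v x}).toReal
      - Real.exp ε * (gaussianReal m' v
          {x | Real.exp ε * gaussianPDFReal m' v x < gaussianPDFReal m v x}).toReal
      = stdNormalCDF ((m' - m) / (2 * s) - ε * s / (m' - m))
        - Real.exp ε * stdNormalCDF (-((m' - m) / (2 * s)) - ε * s / (m' - m)) := by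
  have hs0 : s ≠ 0 := left_ne_zero_of_mul hs.ne'
  rw [setOf_exp_mul_gaussianPDFReal_lt m m' ε s hv hs,
    gaussianReal_setOf_sub_div_lt_toReal m s _ _ hv hs0,
    gaussianReal_setOf_sub_div_lt_toReal m' s _ _ hv hs0]
  congr 2
  · ring
  · congr 1
    ring

theorem hockey_stick_between_equal_variance_gaussians_general
    (m m' σ ε Δ : ℝ) (hσ : 0 < σ) (hΔdef : Δ = |m - m'|) (hΔ : 0 < Δ) :
    IsGreatest
      {d : ℝ | ∃ R : Set ℝ, MeasurableSet R ∧
        d = ((gaussianReal m ⟨σ ^ 2, sq_nonneg σ⟩) R).toReal -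
              Real.exp ε * ((gaussianReal m' ⟨σ ^ 2, sq_nonneg σ⟩) R).toReal}
      (stdNormalCDF (Δ / (2 * σ) - ε * σ / Δ) -
        Real.exp ε * stdNormalCDF (-(Δ / (2 * σ)) - ε * σ / Δ)) ∧
    ((gaussianReal m ⟨σ ^ 2, sq_nonneg σ⟩)
        {x : ℝ | gaussianPDFReal m ⟨σ ^ 2, sq_nonneg σ⟩ x >
            Real.exp ε * gaussianPDFReal m' ⟨σ ^ 2, sq_nonneg σ⟩ x}).toReal -
      Real.exp ε * ((gaussianReal m' ⟨σ ^ 2, sq_nonneg σ⟩)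
        {x : ℝ | gaussianPDFReal m ⟨σ ^ 2, sq_nonneg σ⟩ x >
            Real.exp ε * gaussianPDFReal m' ⟨σ ^ 2, sq_nonneg σ⟩ x}).toReal =
      stdNormalCDF (Δ / (2 * σ) - ε * σ / Δ) -
        Real.exp ε * stdNormalCDF (-(Δ / (2 * σ)) - ε * σ / Δ) := by
  set v : ℝ≥0 := ⟨σ ^ 2, sq_nonneg σ⟩
  have hΔsq : Δ ^ 2 = (m' - m) ^ 2 := by rw [hΔdef, sq_abs]; ring
  have hmm : m' - m ≠ 0 := fun h => by simp [h, hΔ.ne'] at hΔsq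
  -- the signed standard deviation: `s ^ 2 = σ ^ 2`, with the sign of `m' - m`
  set s := Δ * σ / (m' - m)
  have hvs : (v : ℝ) = s ^ 2 := by
    change σ ^ 2 = _
    rw [div_pow, mul_pow, hΔsq, mul_div_cancel_left₀ _ (pow_ne_zero 2 hmm)]
  have hs : 0 < s * (m' - m) := by rw [div_mul_cancel₀ _ hmm]; positivity
  have hhalf : (m' - m) / (2 * s) = Δ / (2 * σ) := by
    simp only [s]
    field_simp
    exact hΔsq.symm
  have hshift : ε * s / (m' - m) = ε * σ / Δ := by
    simp only [s]
    field_simp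
    rw [hΔsq]
  have hattain := gaussianReal_setOf_exp_mul_gaussianPDFReal_lt_toReal_sub m m' ε s hvs hs
  rw [hhalf, hshift] at hattain
  refine ⟨⟨⟨_, ?_, hattain.symm⟩, ?_⟩, hattain⟩
  · exact measurableSet_lt ((measurable_gaussianPDFReal m' v).const_mul _)
      (measurable_gaussianPDFReal m v)
  · rintro d ⟨R, hR, rfl⟩
    have hv : v ≠ 0 := by
      rw [ne_eq, ← NNReal.coe_eq_zero]
      exact pow_ne_zero 2 hσ.ne'
    exact (gaussianReal_toReal_sub_mul_le m m' _ hv hR).trans_eq hattain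

theorem hockey_stick_between_equal_variance_gaussians
    (m m' σ ε Δ : ℝ) (hσ : 0 < σ) (hΔdef : Δ = |m - m'|) (hΔ : 0 < Δ) (hε : 0 ≤ ε) :
    IsGreatest
      {d : ℝ | ∃ R : Set ℝ, MeasurableSet R ∧
        d = ((gaussianReal m ⟨σ ^ 2, sq_nonneg σ⟩) R).toReal -
              Real.exp ε * ((gaussianReal m' ⟨σ ^ 2, sq_nonneg σ⟩) R).toReal}
      (stdNormalCDF (Δ / (2 * σ) - ε * σ / Δ) -
        Real.exp ε * stdNormalCDF (-(Δ / (2 * σ)) - ε * σ / Δ)) ∧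
    ((gaussianReal m ⟨σ ^ 2, sq_nonneg σ⟩)
        {x : ℝ | gaussianPDFReal m ⟨σ ^ 2, sq_nonneg σ⟩ x >
            Real.exp ε * gaussianPDFReal m' ⟨σ ^ 2, sq_nonneg σ⟩ x}).toReal -
      Real.exp ε * ((gaussianReal m' ⟨σ ^ 2, sq_nonneg σ⟩)
        {x : ℝ | gaussianPDFReal m ⟨σ ^ 2, sq_nonneg σ⟩ x >
            Real.exp ε * gaussianPDFReal m' ⟨σ ^ 2, sq_nonneg σ⟩ x}).toReal =
      stdNormalCDF (Δ / (2 * σ) - ε * σ / Δ) -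
        Real.exp ε * stdNormalCDF (-(Δ / (2 * σ)) - ε * σ / Δ) :=
  hockey_stick_between_equal_variance_gaussians_general m m' σ ε Δ hσ hΔdef hΔ
end

section
/- Let λ be a σ-finite measure on a measurable space, and let μ₀, μ₁, μ₁' be probability measures with densities with respect to λ. Let η ∈ (0, 1], α ≥ 1, α' = 1 + η(α − 1) and β = α'/α. Set μ = (1−η)·μ₀ + η·μ₁ and μ' = (1−η)·μ₀ + η·μ₁'. Then D_{α'}(μ ‖ μ') = η · D_α(μ₁ ‖ (1−β)·μ₀ + β·μ₁'), where D_α(ρ‖ρ') = ∫ max{0, (density of ρ) − α·(density of ρ')} dλ. -/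
open MeasureTheory

theorem advanced_joint_convexity
    {Ω : Type*} [MeasurableSpace Ω] (lam : Measure Ω) [SigmaFinite lam]
    (μ₀ μ₁ μ₁' : Measure Ω)
    [IsProbabilityMeasure μ₀] [IsProbabilityMeasure μ₁] [IsProbabilityMeasure μ₁']
    (f₀ f₁ f₁' : Ω → ℝ) (hf₀ : Measurable f₀) (hf₁ : Measurable f₁) (hf₁' : Measurable f₁')
    (hf₀0 : ∀ x, 0 ≤ f₀ x) (hf₁0 : ∀ x, 0 ≤ f₁ x) (hf₁'0 : ∀ x, 0 ≤ f₁' x)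
    (hμ₀ : μ₀ = lam.withDensity fun x => ENNReal.ofReal (f₀ x))
    (hμ₁ : μ₁ = lam.withDensity fun x => ENNReal.ofReal (f₁ x))
    (hμ₁' : μ₁' = lam.withDensity fun x => ENNReal.ofReal (f₁' x))
    (η α α' β : ℝ) (hη0 : 0 < η) (hη1 : η ≤ 1) (hα : 1 ≤ α)
    (hα' : α' = 1 + η * (α - 1)) (hβ : β = α' / α) :
    ∫ x, max 0 (((1 - η) * f₀ x + η * f₁ x) - α' * ((1 - η) * f₀ x + η * f₁' x)) ∂lam =
      η * ∫ x, max 0 (f₁ x - α * ((1 - β) * f₀ x + β * f₁' x)) ∂lam := by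
  have hαpos : (0:ℝ) < α := lt_of_lt_of_le one_pos hα
  have key : ∀ x, max 0 (((1 - η) * f₀ x + η * f₁ x) - α' * ((1 - η) * f₀ x + η * f₁' x))
      = η * max 0 (f₁ x - α * ((1 - β) * f₀ x + β * f₁' x)) := by
    intro x
    have h1 : ((1 - η) * f₀ x + η * f₁ x) - α' * ((1 - η) * f₀ x + η * f₁' x)
        = η * (f₁ x - α * ((1 - β) * f₀ x + β * f₁' x)) := by
      subst hα' hβ
      field_simp
      ring
    rw [h1, mul_max_of_nonneg _ _ hη0.le, mul_zero]
  simp only [key]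
  exact integral_const_mul η _
end

section
/- Let λ be a σ-finite measure on a measurable space, and let μ₀, μ₁, μ₁' be probability measures with densities with respect to λ. Let η ∈ (0, 1], α ≥ 1, α' = 1 + η(α − 1), and δ ≥ 0. Set μ = (1−η)·μ₀ + η·μ₁ and μ' = (1−η)·μ₀ + η·μ₁'. If D_α(μ₁‖μ₀) ≤ δ and D_α(μ₁‖μ₁') ≤ δ, then D_{α'}(μ‖μ') ≤ η·δ, where D_α(ρ‖ρ') = ∫ max{0, (density of ρ) − α·(density of ρ')} dλ. -/
/-!
With `β = α' / α ∈ [0, 1]`, advanced joint convexity is the pointwise identity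
`μ - α' μ' = η ((1 - β) (μ₁ - α μ₀) + β (μ₁ - α μ₁'))`.
Since the positive part is convex, integrating gives
`D_{α'}(μ‖μ') ≤ η ((1 - β) D_α(μ₁‖μ₀) + β D_α(μ₁‖μ₁')) ≤ η δ`.
Integrating requires the two hypotheses not to be about junk-zero Bochner integrals: the integrands
are integrable since `0 ≤ max 0 (f₁ - α g) ≤ max 0 f₁` and `μ₁` is finite.
-/

open MeasureTheory

/-- The paper's `D_α(μ‖ν)`, written in terms of the densities `f`, `g` of `μ`, `ν` w.r.t. `lam`. -/
noncomputable def hockeyStick {Ω : Type*} [MeasurableSpace Ω] (lam : Measure Ω) (α : ℝ)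
    (f g : Ω → ℝ) : ℝ :=
  ∫ x, max 0 (f x - α * g x) ∂lam

lemma max_zero_mul_add_mul_le {a b : ℝ} (ha : 0 ≤ a) (hb : 0 ≤ b) (x y : ℝ) :
    max 0 (a * x + b * y) ≤ a * max 0 x + b * max 0 y :=
  max_le (by positivity) <|
    add_le_add (mul_le_mul_of_nonneg_left (le_max_right _ _) ha)
      (mul_le_mul_of_nonneg_left (le_max_right _ _) hb)

lemma subsample_sub_eq {η α α' : ℝ} (hα : α ≠ 0) (hα' : α' = 1 + η * (α - 1)) (p q q' : ℝ) :
    ((1 - η) * p + η * q) - α' * ((1 - η) * p + η * q') =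
      η * ((1 - α' / α) * (q - α * p) + α' / α * (q - α * q')) := by
  subst hα'
  field_simp
  ring

lemma subsample_ratio_mem_Icc {η α α' : ℝ} (hη0 : 0 ≤ η) (hη1 : η ≤ 1) (hα : 1 ≤ α)
    (hα' : α' = 1 + η * (α - 1)) : α' / α ∈ Set.Icc 0 1 := by
  have hα0 : 0 < α := by linarith
  constructor
  · exact div_nonneg (by nlinarith) hα0.le
  · rw [div_le_one hα0]
    nlinarith

section Integral

variable {Ω : Type*} [MeasurableSpace Ω] {lam : Measure Ω}

lemma integrable_max_zero_of_isFiniteMeasure_withDensity {f : Ω → ℝ} (hf : AEMeasurable f lam)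
    [IsFiniteMeasure (lam.withDensity fun x => ENNReal.ofReal (f x))] :
    Integrable (fun x => max 0 (f x)) lam := by
  have hfin : ∫⁻ x, ENNReal.ofReal (f x) ∂lam ≠ ⊤ := by
    rw [← setLIntegral_univ, ← withDensity_apply _ MeasurableSet.univ]
    exact measure_ne_top _ _
  simpa only [ENNReal.toReal_ofReal', max_comm] using
    integrable_toReal_of_lintegral_ne_top hf.ennreal_ofReal hfin

lemma integrable_max_zero_sub_mul {α : ℝ} (hα : 0 ≤ α) {f g : Ω → ℝ}
    (hf : Measurable f) (hg : Measurable g) (hg0 : ∀ x, 0 ≤ g x)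
    [IsFiniteMeasure (lam.withDensity fun x => ENNReal.ofReal (f x))] :
    Integrable (fun x => max 0 (f x - α * g x)) lam := by
  refine (integrable_max_zero_of_isFiniteMeasure_withDensity hf.aemeasurable).mono
    (measurable_const.max (hf.sub (hg.const_mul α))).aestronglyMeasurable
    (Filter.Eventually.of_forall fun x => ?_)
  rw [Real.norm_of_nonneg (le_max_left _ _), Real.norm_of_nonneg (le_max_left _ _)]
  have := mul_nonneg hα (hg0 x)
  exact max_le_max le_rfl (by linarith)

lemma hockeyStick_subsample_le {η α α' : ℝ} (hη0 : 0 ≤ η) (hη1 : η ≤ 1) (hα : 1 ≤ α)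
    (hα' : α' = 1 + η * (α - 1)) {f₀ f₁ f₁' : Ω → ℝ}
    (h₁₀ : Integrable (fun x => max 0 (f₁ x - α * f₀ x)) lam)
    (h₁₁' : Integrable (fun x => max 0 (f₁ x - α * f₁' x)) lam) :
    hockeyStick lam α' (fun x => (1 - η) * f₀ x + η * f₁ x)
        (fun x => (1 - η) * f₀ x + η * f₁' x) ≤
      η * ((1 - α' / α) * hockeyStick lam α f₁ f₀ + α' / α * hockeyStick lam α f₁ f₁') := by
  obtain ⟨hβ0, hβ1⟩ := subsample_ratio_mem_Icc hη0 hη1 hα hα'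
  have hpointwise : ∀ x, max 0 (((1 - η) * f₀ x + η * f₁ x) - α' * ((1 - η) * f₀ x + η * f₁' x))
      ≤ η * ((1 - α' / α) * max 0 (f₁ x - α * f₀ x) + α' / α * max 0 (f₁ x - α * f₁' x)) := by
    intro x
    have hconv := max_zero_mul_add_mul_le (sub_nonneg.2 hβ1) hβ0
      (f₁ x - α * f₀ x) (f₁ x - α * f₁' x)
    rw [subsample_sub_eq (by linarith) hα']
    exact max_le (mul_nonneg hη0 ((le_max_left _ _).trans hconv))
      (mul_le_mul_of_nonneg_left ((le_max_right _ _).trans hconv) hη0)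
  have hmix := ((h₁₀.const_mul (1 - α' / α)).add (h₁₁'.const_mul (α' / α))).const_mul η
  calc hockeyStick lam α' _ _
      ≤ ∫ x, η * ((1 - α' / α) * max 0 (f₁ x - α * f₀ x)
          + α' / α * max 0 (f₁ x - α * f₁' x)) ∂lam :=
        integral_mono_of_nonneg (Filter.Eventually.of_forall fun _ => le_max_left _ _) hmix
          (Filter.Eventually.of_forall hpointwise)
    _ = _ := by
      rw [integral_const_mul, integral_add (h₁₀.const_mul _) (h₁₁'.const_mul _),
        integral_const_mul, integral_const_mul]
      rfl

end Integral

theorem hockey_stick_amplification_by_subsampling_general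
    {Ω : Type*} [MeasurableSpace Ω] (lam : Measure Ω)
    (μ₁ : Measure Ω)
    [IsProbabilityMeasure μ₁]
    (f₀ f₁ f₁' : Ω → ℝ) (hf₀ : Measurable f₀) (hf₁ : Measurable f₁) (hf₁' : Measurable f₁')
    (hf₀0 : ∀ x, 0 ≤ f₀ x) (hf₁'0 : ∀ x, 0 ≤ f₁' x)
    (hμ₁ : μ₁ = lam.withDensity fun x => ENNReal.ofReal (f₁ x))
    (η α α' δ : ℝ) (hη0 : 0 < η) (hη1 : η ≤ 1) (hα : 1 ≤ α)
    (hα' : α' = 1 + η * (α - 1))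
    (h₁₀ : ∫ x, max 0 (f₁ x - α * f₀ x) ∂lam ≤ δ)
    (h₁₁' : ∫ x, max 0 (f₁ x - α * f₁' x) ∂lam ≤ δ) :
    ∫ x, max 0 (((1 - η) * f₀ x + η * f₁ x) - α' * ((1 - η) * f₀ x + η * f₁' x)) ∂lam ≤
      η * δ := by
  subst hμ₁
  obtain ⟨hβ0, hβ1⟩ := subsample_ratio_mem_Icc hη0.le hη1 hα hα'
  have hα0 : 0 ≤ α := by linarith
  have hmix := hockeyStick_subsample_le hη0.le hη1 hα hα'
    (integrable_max_zero_sub_mul (lam := lam) hα0 hf₁ hf₀ hf₀0)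
    (integrable_max_zero_sub_mul (lam := lam) hα0 hf₁ hf₁' hf₁'0)
  have hconvex : (1 - α' / α) * hockeyStick lam α f₁ f₀ + α' / α * hockeyStick lam α f₁ f₁' ≤ δ := by
    have hD₀ : hockeyStick lam α f₁ f₀ ≤ δ := h₁₀
    have hD₁ : hockeyStick lam α f₁ f₁' ≤ δ := h₁₁'
    nlinarith [mul_le_mul_of_nonneg_left hD₀ (sub_nonneg.2 hβ1), mul_le_mul_of_nonneg_left hD₁ hβ0]
  exact hmix.trans (mul_le_mul_of_nonneg_left hconvex hη0.le)

theorem hockey_stick_amplification_by_subsampling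
    {Ω : Type*} [MeasurableSpace Ω] (lam : Measure Ω) [SigmaFinite lam]
    (μ₀ μ₁ μ₁' : Measure Ω)
    [IsProbabilityMeasure μ₀] [IsProbabilityMeasure μ₁] [IsProbabilityMeasure μ₁']
    (f₀ f₁ f₁' : Ω → ℝ) (hf₀ : Measurable f₀) (hf₁ : Measurable f₁) (hf₁' : Measurable f₁')
    (hf₀0 : ∀ x, 0 ≤ f₀ x) (hf₁0 : ∀ x, 0 ≤ f₁ x) (hf₁'0 : ∀ x, 0 ≤ f₁' x)
    (hμ₀ : μ₀ = lam.withDensity fun x => ENNReal.ofReal (f₀ x))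
    (hμ₁ : μ₁ = lam.withDensity fun x => ENNReal.ofReal (f₁ x))
    (hμ₁' : μ₁' = lam.withDensity fun x => ENNReal.ofReal (f₁' x))
    (η α α' δ : ℝ) (hη0 : 0 < η) (hη1 : η ≤ 1) (hα : 1 ≤ α)
    (hα' : α' = 1 + η * (α - 1)) (hδ : 0 ≤ δ)
    (h₁₀ : ∫ x, max 0 (f₁ x - α * f₀ x) ∂lam ≤ δ)
    (h₁₁' : ∫ x, max 0 (f₁ x - α * f₁' x) ∂lam ≤ δ) :
    ∫ x, max 0 (((1 - η) * f₀ x + η * f₁ x) - α' * ((1 - η) * f₀ x + η * f₁' x)) ∂lam ≤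
      η * δ :=
  hockey_stick_amplification_by_subsampling_general lam μ₁ f₀ f₁ f₁' hf₀ hf₁ hf₁' hf₀0 hf₁'0 hμ₁ η α
    α' δ hη0 hη1 hα hα' h₁₀ h₁₁'
end
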